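/- EXC is semantically admissible for support: for any base B and formula φ, if ⊩_B φ and ⊩_B φ⊥, then ⊩_B ⊥. -/

import Mathlib

/-- Literals: assertions `pos c` and denials `neg c` of contents `c`. -/
inductive Lit (C : Type) : Type
  | pos : C → Lit C
  | neg : C → Lit C

/-- Dual literal: swaps assertion and denial. -/
def Lit.dual {C : Type} : Lit C → Lit C
  | .pos c => .neg c
  | .neg c => .pos c

/-- Formulas over literals. -/
inductive Form (C : Type) : Type
  | lit : Lit C → Form C
  | bot : Form C
  | top : Form C
  | and : Form C → Form C → Form C
  | or  : Form C → Form C → Form C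
  | imp : Form C → Form C → Form C

/-- The de Morgan dual operator on formulas. -/
def Form.dual {C : Type} : Form C → Form C
  | .lit l => .lit l.dual
  | .bot => .top
  | .top => .bot
  | .and φ ψ => .or φ.dual ψ.dual
  | .or φ ψ => .and φ.dual ψ.dual
  | .imp φ ψ => .and φ ψ.dual

/-- A valuation: maps literals to {0,1} with `v (neg c) = 1 - v (pos c)`. -/
structure Val (C : Type) where
  v : Lit C → ℕ
  le_one : ∀ l, v l ≤ 1
  dual_neg : ∀ c : C, v (Lit.neg c) = 1 - v (Lit.pos c)

/-- Truth-functional extension of a valuation to formulas. -/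
def Val.eval {C : Type} (v : Val C) : Form C → ℕ
  | .lit l => v.v l
  | .bot => 0
  | .top => 1
  | .and φ ψ => min (v.eval φ) (v.eval ψ)
  | .or φ ψ => max (v.eval φ) (v.eval ψ)
  | .imp φ ψ => max (1 - v.eval φ) (v.eval ψ)

/-- Classical consequence. -/
def Entails {C : Type} (Γ : Set (Form C)) (φ : Form C) : Prop :=
  ∀ v : Val C, (∀ γ ∈ Γ, v.eval γ = 1) → v.eval φ = 1

/-- The natural deduction system NK±: intuitionistic rules plus DM and EXC. -/
inductive NK {C : Type} : Set (Form C) → Form C → Prop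
  | hyp {Γ} {φ : Form C} : φ ∈ Γ → NK Γ φ
  | topI {Γ} : NK Γ .top
  | botE {Γ} {φ : Form C} : NK Γ .bot → NK Γ φ
  | impI {Γ} {φ ψ : Form C} : NK (insert φ Γ) ψ → NK Γ (.imp φ ψ)
  | impE {Γ} {φ ψ : Form C} : NK Γ (.imp φ ψ) → NK Γ φ → NK Γ ψ
  | andI {Γ} {φ ψ : Form C} : NK Γ φ → NK Γ ψ → NK Γ (.and φ ψ)
  | andE1 {Γ} {φ ψ : Form C} : NK Γ (.and φ ψ) → NK Γ φ
  | andE2 {Γ} {φ ψ : Form C} : NK Γ (.and φ ψ) → NK Γ ψ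
  | orI1 {Γ} {φ ψ : Form C} : NK Γ φ → NK Γ (.or φ ψ)
  | orI2 {Γ} {φ ψ : Form C} : NK Γ ψ → NK Γ (.or φ ψ)
  | orE {Γ} {φ ψ χ : Form C} :
      NK Γ (.or φ ψ) → NK (insert φ Γ) χ → NK (insert ψ Γ) χ → NK Γ χ
  | dm {Γ} {φ : Form C} : NK (insert φ Γ) .bot → NK Γ φ.dual
  | exc {Γ} {φ : Form C} : NK Γ φ → NK Γ φ.dual → NK Γ .bot

/-- An atomic rule `(L₁⇒l₁),…,(Lₙ⇒lₙ) ⇒ l` (the case of an empty premiss list,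
together with `APP₁`/`APP₂`, covers both forms of atomic rule). -/
structure AtomicRule (C : Type) where
  prems : List (Set (Lit C) × Lit C)
  concl : Lit C

/-- A base is a set of atomic rules. -/
abbrev Base (C : Type) := Set (AtomicRule C)

/-- Derivability in a base.  Conclusions are `some l` (a literal) or `none` (⊥).
Closed under REF, APP₁/APP₂, ABS and DM. -/
inductive Deriv {C : Type} (B : Base C) : Set (Lit C) → Option (Lit C) → Prop
  | ref {L} {l : Lit C} : l ∈ L → Deriv B L (some l)
  | app {L} (r : AtomicRule C) : r ∈ B →
      (∀ p ∈ r.prems, Deriv B (p.1 ∪ L) (some p.2)) → Deriv B L (some r.concl)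
  | abs {L} {l : Lit C} : Deriv B L (some l) → Deriv B L (some l.dual) →
      Deriv B L none
  | dm {L} {l : Lit C} : Deriv B (insert l L) none → Deriv B L (some l.dual)

/-- Support in a base (empty context). -/
def Supp {C : Type} (B : Base C) : Form C → Prop
  | .lit l => Deriv B ∅ (some l)
  | .bot => ∀ l : Lit C, Deriv B ∅ (some l)
  | .top => True
  | .and φ ψ => Supp B φ ∧ Supp B ψ
  | .or φ ψ => ∀ X : Base C, B ⊆ X → ∀ l : Lit C,
      (∀ Y : Base C, X ⊆ Y → Supp Y φ → Deriv Y ∅ (some l)) →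
      (∀ Y : Base C, X ⊆ Y → Supp Y ψ → Deriv Y ∅ (some l)) →
      Deriv X ∅ (some l)
  | .imp φ ψ => ∀ X : Base C, B ⊆ X → Supp X φ → Supp X ψ

/-- Support with a context: `Γ ⊩_B φ`. -/
def SuppCtx {C : Type} (B : Base C) (Γ : Set (Form C)) (φ : Form C) : Prop :=
  ∀ X : Base C, B ⊆ X → (∀ γ ∈ Γ, Supp X γ) → Supp X φ

/-- Validity: support in every base. -/
def Valid {C : Type} (Γ : Set (Form C)) (φ : Form C) : Prop :=
  ∀ B : Base C, SuppCtx B Γ φ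

/-!
Induction on `φ`. For literals, `l` and `l⊥` give `⊥` under any hypothesis by ABS, so DM derives
every literal `m` from the hypothesis `m⊥`. In the compound cases one of `φ`, `φ⊥` is a
disjunction or an implication and the other supplies the material to eliminate it: the
disjunction clause, applied to an arbitrary literal, reduces to the induction hypothesis for
the disjuncts (with support of the other side transported to extensions by monotonicity), and
`(φ → ψ)⊥ = φ ∧ ψ⊥` gives `ψ` and `ψ⊥` by modus ponens.
-/

theorem Lit.dual_dual {C : Type} (l : Lit C) : l.dual.dual = l := by
  cases l <;> rfl

namespace Deriv

variable {C : Type} {B : Base C}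

theorem mono_ctx {L L' : Set (Lit C)} {o : Option (Lit C)} (h : Deriv B L o) (hL : L ⊆ L') :
    Deriv B L' o := by
  induction h generalizing L' with
  | ref hl => exact ref (hL hl)
  | app r hr _ ih => exact app r hr fun p hp => ih p hp (Set.union_subset_union_right _ hL)
  | abs _ _ ih₁ ih₂ => exact abs (ih₁ hL) (ih₂ hL)
  | dm _ ih => exact dm (ih (Set.insert_subset_insert hL))

theorem mono_base {B' : Base C} {L : Set (Lit C)} {o : Option (Lit C)} (h : Deriv B L o)
    (hB : B ⊆ B') : Deriv B' L o := by
  induction h with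
  | ref hl => exact ref hl
  | app r hr _ ih => exact app r (hB hr) ih
  | abs _ _ ih₁ ih₂ => exact abs ih₁ ih₂
  | dm _ ih => exact dm ih

theorem absurd {L : Set (Lit C)} {l : Lit C} (h : Deriv B L (some l))
    (h' : Deriv B L (some l.dual)) (m : Lit C) : Deriv B L (some m) := by
  have hbot : Deriv B (insert m.dual L) none :=
    abs (h.mono_ctx (Set.subset_insert _ _)) (h'.mono_ctx (Set.subset_insert _ _))
  simpa only [Lit.dual_dual] using dm hbot

end Deriv

theorem Supp.mono {C : Type} {B B' : Base C} (hB : B ⊆ B') :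
    ∀ {φ : Form C}, Supp B φ → Supp B' φ
  | .lit _, h => h.mono_base hB
  | .bot, h => fun l => (h l).mono_base hB
  | .top, h => h
  | .and _ _, h => ⟨Supp.mono hB h.1, Supp.mono hB h.2⟩
  | .or _ _, h => fun X hX => h X (hB.trans hX)
  | .imp _ _, h => fun X hX => h X (hB.trans hX)

/-- EXC is semantically admissible for support. -/
theorem supp_exc {C : Type} (B : Base C) (φ : Form C)
    (h1 : Supp B φ) (h2 : Supp B φ.dual) : Supp B .bot := by
  induction φ generalizing B with
  | lit l => exact Deriv.absurd h1 h2
  | bot => exact h1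
  | top => exact h2
  | and φ ψ ihφ ihψ =>
      intro l
      exact h2 B subset_rfl l
        (fun Y hY hφ' => ihφ Y (h1.1.mono hY) hφ' l)
        (fun Y hY hψ' => ihψ Y (h1.2.mono hY) hψ' l)
  | or φ ψ ihφ ihψ =>
      intro l
      exact h1 B subset_rfl l
        (fun Y hY hφ => ihφ Y hφ (h2.1.mono hY) l)
        (fun Y hY hψ => ihψ Y hψ (h2.2.mono hY) l)
  | imp φ ψ ihφ ihψ => exact ihψ B (h1 B subset_rfl h2.1) h2.2
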